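/- Let φ be a stability function on an abelian length category A inducing, via torsion classes T_{≥p} = Filt(φ-semistables of phase ≥ p), a cover T_{≥p} ⋖ T_{≥q}. Then there exists a φ-stable object N, unique up to isomorphism, whose phase lies in the equivalence class [q] = {r : T_{≥r} = T_{≥q}}; moreover N is a minimal extending object for T_{≥p} and q ≤ φ(N) < p. -/

import Mathlib

open CategoryTheory CategoryTheory.Limits

universe v u

variable {C : Type u} [Category.{v} C] [Abelian C]

/-- `f, g` form a short exact sequence `0 ⟶ X₁ ⟶ X₂ ⟶ X₃ ⟶ 0`. -/
def IsSES {X₁ X₂ X₃ : C} (f : X₁ ⟶ X₂) (g : X₂ ⟶ X₃) : Prop :=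
  ∃ w : f ≫ g = 0, (CategoryTheory.ShortComplex.mk f g w).ShortExact

/-- A torsion pair `(T, F)`. -/
structure TorsionPairOn (T F : Set C) : Prop where
  hom_zero : ∀ X ∈ T, ∀ Y ∈ F, ∀ f : X ⟶ Y, f = 0
  mem_torsion : ∀ X : C, (∀ Y ∈ F, ∀ f : X ⟶ Y, f = 0) → X ∈ T
  mem_free : ∀ Y : C, (∀ X ∈ T, ∀ f : X ⟶ Y, f = 0) → Y ∈ F

def IsoClosed (S : Set C) : Prop := ∀ ⦃X Y : C⦄, (X ≅ Y) → X ∈ S → Y ∈ S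

def ExtClosedSet (S : Set C) : Prop :=
  ∀ ⦃X₁ X₂ X₃ : C⦄ (f : X₁ ⟶ X₂) (g : X₂ ⟶ X₃), IsSES f g → X₁ ∈ S → X₃ ∈ S → X₂ ∈ S

def QuotClosed (S : Set C) : Prop :=
  ∀ ⦃X Y : C⦄ (p : X ⟶ Y), Epi p → X ∈ S → Y ∈ S

structure IsTorsionClass (T : Set C) : Prop where
  zero_mem : ∀ X : C, IsZero X → X ∈ T
  iso_closed : IsoClosed T
  ext_closed : ExtClosedSet T
  quot_closed : QuotClosed T

/-- `T'` covers `T` in the lattice of torsion classes. -/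
def CoversTC (T T' : Set C) : Prop :=
  T ⊆ T' ∧ T ≠ T' ∧
    ∀ S : Set C, IsTorsionClass S → T ⊆ S → S ⊆ T' → S = T ∨ S = T'

/-- The extension closure of a class of objects. -/
inductive ExtClosure (S : Set C) : C → Prop
  | of (X : C) (h : X ∈ S) : ExtClosure S X
  | zero (X : C) (h : IsZero X) : ExtClosure S X
  | iso (X Y : C) (e : X ≅ Y) (h : ExtClosure S X) : ExtClosure S Y
  | ext (X₁ X₂ X₃ : C) (f : X₁ ⟶ X₂) (g : X₂ ⟶ X₃) (hseq : IsSES f g)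
      (h₁ : ExtClosure S X₁) (h₃ : ExtClosure S X₃) : ExtClosure S X₂

def IsBrick (X : C) : Prop := ¬ IsZero X ∧ ∀ f : X ⟶ X, f = 0 ∨ IsIso f

def IsIndec (X : C) : Prop :=
  ¬ IsZero X ∧ ∀ (Y Z : C), (X ≅ Y ⊞ Z) → IsZero Y ∨ IsZero Z

structure IsMinimalExtending (T : Set C) (M : C) : Prop where
  proper_quot_mem : ∀ ⦃Y : C⦄ (p : M ⟶ Y), Epi p → ¬ IsIso p → Y ∈ T
  ext_mem : ∀ ⦃X Tt : C⦄ (f : M ⟶ X) (g : X ⟶ Tt), IsSES f g → Tt ∈ T →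
      (¬ ∃ r : X ⟶ M, f ≫ r = 𝟙 M) → X ∈ T
  hom_zero : ∀ ⦃W : C⦄, W ∈ T → ∀ f : W ⟶ M, f = 0

/-- A finite filtration of `X` by subobjects. -/
structure FiltrationOf (X : C) where
  len : ℕ
  obj : Fin (len + 1) → C
  map : ∀ i : Fin len, obj i.castSucc ⟶ obj i.succ
  mono : ∀ i, Mono (map i)
  zero : IsZero (obj 0)
  top : obj (Fin.last len) ≅ X

noncomputable def FiltrationOf.subquot {X : C} (F : FiltrationOf X) (i : Fin F.len) : C :=
  cokernel (F.map i)

variable {P : Type*} [LinearOrder P]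

def Semistable (φ : C → P) (M : C) : Prop :=
  ¬ IsZero M ∧ ∀ ⦃L : C⦄ (f : L ⟶ M), Mono f → ¬ IsZero L → φ L ≤ φ M

def StableObj (φ : C → P) (M : C) : Prop :=
  ¬ IsZero M ∧ ∀ ⦃L : C⦄ (f : L ⟶ M), Mono f → ¬ IsZero L → ¬ IsIso f → φ L < φ M

structure IsStabilityFunction (φ : C → P) : Prop where
  iso_invariant : ∀ ⦃X Y : C⦄, (X ≅ Y) → φ X = φ Y
  seesaw : ∀ ⦃L M N : C⦄ (f : L ⟶ M) (g : M ⟶ N), IsSES f g →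
      ¬ IsZero L → ¬ IsZero M → ¬ IsZero N →
      (φ L = φ M ∧ φ M = φ N) ∨ (φ L < φ M ∧ φ M < φ N) ∨ (φ N < φ M ∧ φ M < φ L)

/-- The torsion class of a stability function: extension closure of the
semistable objects of phase at least `p`. -/
def TgeSet {C : Type u} [Category.{v} C] [Abelian C]
    {P : Type*} [LinearOrder P] (φ : C → P) (p : P) : Set C :=
  {X : C | ExtClosure {Y : C | Semistable φ Y ∧ p ≤ φ Y} X}

/-!
Since `T_{≥p} ⊊ T_{≥q}`, some semistable `Y` with `q ≤ φ Y < p` lies outside `T_{≥p}`, and a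
minimal subobject of `Y` of phase `≥ φ Y` is a stable `N` of the same phase. The torsion classes
`T_{≥φ N}` and `T_{>φ N}` both lie between `T_{≥p}` and `T_{≥q}`; the first contains `N ∉ T_{≥p}`
and the second misses `N ∈ T_{≥q}`, so the cover forces `T_{≥φ N} = T_{≥q}` and
`T_{>φ N} = T_{≥p}`. A stable `N` is minimal extending for `T_{>φ N}`: its proper quotients have
larger phase, and in a non-split extension of an object of `T_{>φ N}` by `N` the seesaw property
leaves no room for a nonzero torsion-free quotient. If `N'` is another such stable object, it has
the same phase, so `Hom(N, N') = 0` unless `N ≅ N'`; then `T_{≥q} ∩ ⊥N'` is a torsion class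
between `T_{≥p}` and `T_{≥q}` containing `N`, hence equal to `T_{≥q} ∋ N'`, which is absurd.
-/

section Abelian

lemma isSES_kernel {X Z : C} (e : X ⟶ Z) [Epi e] : IsSES (kernel.ι e) e :=
  ⟨kernel.condition e, ShortComplex.ShortExact.mk'
    (ShortComplex.exact_of_f_is_kernel (ShortComplex.mk _ e _) (kernelIsKernel e))
    (by dsimp; infer_instance) (by dsimp; infer_instance)⟩

lemma isSES_cokernel {U X : C} (m : U ⟶ X) [Mono m] : IsSES m (cokernel.π m) :=
  ⟨cokernel.condition m, ShortComplex.ShortExact.mk'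
    (ShortComplex.exact_of_g_is_cokernel (ShortComplex.mk m _ _) (cokernelIsCokernel m))
    (by dsimp; infer_instance) (by dsimp; infer_instance)⟩

namespace IsSES

variable {X₁ X₂ X₃ : C} {f : X₁ ⟶ X₂} {g : X₂ ⟶ X₃}

lemma epi_g (h : IsSES f g) : Epi g := h.2.epi_g

lemma exists_desc (h : IsSES f g) {T : C} (u : X₂ ⟶ T) (hu : f ≫ u = 0) :
    ∃ v : X₃ ⟶ T, g ≫ v = u :=
  have := h.epi_g
  ⟨_, (CokernelCofork.IsColimit.desc' h.2.exact.gIsCokernel u hu).2⟩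

lemma isIso_g (h : IsSES f g) (h₁ : IsZero X₁) : IsIso g :=
  have := h.epi_g
  have := h.2.exact.mono_g (h₁.eq_of_src _ _)
  isIso_of_mono_of_epi g

lemma isIso_f (h : IsSES f g) (h₃ : IsZero X₃) : IsIso f :=
  have := h.2.mono_f
  have := h.2.exact.epi_f (h₃.eq_of_tgt _ _)
  isIso_of_mono_of_epi f

end IsSES

lemma not_isZero_image_of_ne_zero {A B : C} {h : A ⟶ B} (hh : h ≠ 0) :
    ¬ IsZero (Abelian.image h) := fun h0 =>
  hh (by rw [← Abelian.image.fac h, h0.eq_of_src (Abelian.image.ι h) 0, comp_zero])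

lemma kernelSubobject_lt_kernelSubobject_comp_cokernel_π {X Z U : C} (e : X ⟶ Z) [Epi e]
    (m : U ⟶ Z) [Mono m] (hU : ¬ IsZero U) :
    kernelSubobject e < kernelSubobject (e ≫ cokernel.π m) := by
  refine (kernelSubobject_comp_le e _).lt_of_ne fun heq => hU (IsZero.of_mono_eq_zero m ?_)
  have hfst : pullback.fst e m ≫ e = 0 := by
    rw [← kernelSubobject_factors_iff, heq, kernelSubobject_factors_iff, ← Category.assoc,
      pullback.condition, Category.assoc, cokernel.condition, comp_zero]
  rw [← cancel_epi (pullback.snd e m), ← pullback.condition, hfst, comp_zero]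

lemma isSES_pullback_snd {A B W : C} (e : A ⟶ B) (m : W ⟶ B) [Epi e] [Mono m] :
    ∃ k : kernel e ⟶ pullback e m,
      k ≫ pullback.fst e m = kernel.ι e ∧ IsSES k (pullback.snd e m) := by
  have w : kernel.ι e ≫ e = (0 : kernel e ⟶ W) ≫ m := by simp
  refine ⟨pullback.lift (kernel.ι e) 0 w, pullback.lift_fst _ _ _, pullback.lift_snd _ _ _, ?_⟩
  have : Mono (pullback.lift (kernel.ι e) 0 w) := mono_of_mono_fac (pullback.lift_fst _ _ w)
  refine ShortComplex.ShortExact.mk' (ShortComplex.exact_of_f_is_kernel _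
    (KernelFork.IsLimit.ofι' _ _ fun {T} t ht => ?_)) this inferInstance
  have htf : (t ≫ pullback.fst e m) ≫ e = 0 := by
    rw [Category.assoc, pullback.condition, ← Category.assoc, ht, zero_comp]
  refine ⟨kernel.lift e (t ≫ pullback.fst e m) htf, pullback.hom_ext ?_ ?_⟩
  · rw [Category.assoc, pullback.lift_fst, kernel.lift_ι]
  · rw [Category.assoc, pullback.lift_snd, comp_zero, ← ht]

end Abelian

section TorsionClass

lemma ExtClosure.mem_of_subset {S T : Set C} (hT₀ : ∀ X : C, IsZero X → X ∈ T)
    (hTiso : IsoClosed T) (hText : ExtClosedSet T) (hST : S ⊆ T) {X : C}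
    (hX : ExtClosure S X) : X ∈ T := by
  induction hX with
  | of X h => exact hST h
  | zero X h => exact hT₀ X h
  | iso X Y e _ ih => exact hTiso e ih
  | ext _ _ _ f g hfg _ _ ih₁ ih₃ => exact hText f g hfg ih₁ ih₃

lemma ExtClosure.of_forall_extClosure {S S' : Set C} (h : ∀ X ∈ S, ExtClosure S' X) {X : C}
    (hX : ExtClosure S X) : ExtClosure S' X :=
  hX.mem_of_subset (T := {X | ExtClosure S' X}) .zero (fun X Y e h => .iso X Y e h)
    (fun X₁ X₂ X₃ f g hfg h₁ h₃ => .ext X₁ X₂ X₃ f g hfg h₁ h₃) h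

lemma ExtClosure.mono {S S' : Set C} (h : S ⊆ S') {X : C} (hX : ExtClosure S X) :
    ExtClosure S' X :=
  hX.of_forall_extClosure fun X hX => .of X (h hX)

lemma isTorsionClass_setOf_hom_eq_zero (F : C) :
    IsTorsionClass {W : C | ∀ h : W ⟶ F, h = 0} := by
  have quot : QuotClosed {W : C | ∀ h : W ⟶ F, h = 0} := fun X Y p _ hX h =>
    (cancel_epi p).mp (by rw [comp_zero]; exact hX _)
  refine ⟨fun X hX h => hX.eq_of_src _ _, fun _ _ e => quot e.hom (inferInstanceAs (Epi e.hom)),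
    ?_, quot⟩
  intro X₁ X₂ X₃ f g hfg h₁ h₃ h
  obtain ⟨v, rfl⟩ := hfg.exists_desc h (h₁ _)
  rw [h₃ v, comp_zero]

lemma IsTorsionClass.inter {T T' : Set C} (hT : IsTorsionClass T) (hT' : IsTorsionClass T') :
    IsTorsionClass (T ∩ T') where
  zero_mem X hX := ⟨hT.zero_mem X hX, hT'.zero_mem X hX⟩
  iso_closed _ _ e h := ⟨hT.iso_closed e h.1, hT'.iso_closed e h.2⟩
  ext_closed _ _ _ f g hfg h₁ h₃ :=
    ⟨hT.ext_closed f g hfg h₁.1 h₃.1, hT'.ext_closed f g hfg h₁.2 h₃.2⟩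
  quot_closed _ _ p hp h := ⟨hT.quot_closed p hp h.1, hT'.quot_closed p hp h.2⟩

/-- `V` is the torsion part of `X`: a maximal subobject lying in `T`. -/
lemma IsTorsionClass.exists_subobject_hom_cokernel_eq_zero [∀ X : C, IsNoetherianObject X]
    {T : Set C} (hT : IsTorsionClass T) (X : C) :
    ∃ V : Subobject X, (V : C) ∈ T ∧ ∀ W ∈ T, ∀ h : W ⟶ cokernel V.arrow, h = 0 := by
  have hbot : (⊥ : Subobject X) ∈ {V : Subobject X | (V : C) ∈ T} :=
    hT.zero_mem _ (IsZero.of_iso (isZero_zero C) Subobject.botCoeIsoZero)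
  obtain ⟨V, hV, hVmax⟩ := (wellFounded_gt (α := Subobject X)).has_min _ ⟨⊥, hbot⟩
  refine ⟨V, hV, fun W hW h => by_contra fun hh => not_isZero_image_of_ne_zero hh ?_⟩
  set m := Abelian.image.ι h
  set π := cokernel.π V.arrow
  -- the preimage of `image h` in `X` is an extension of `image h` by `V`
  obtain ⟨k, hk, hses⟩ := isSES_pullback_snd π m
  have hP : pullback π m ∈ T := hT.ext_closed k _ hses
    (hT.iso_closed (asIso (Abelian.factorThruImage V.arrow)) hV)
    (hT.quot_closed (Abelian.factorThruImage h) inferInstance hW)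
  have hle : V ≤ Subobject.mk (pullback.fst π m) :=
    Subobject.le_mk_of_comm (Abelian.factorThruImage V.arrow ≫ k)
      (by rw [Category.assoc, hk]; exact Abelian.image.fac V.arrow)
  have heq : Subobject.mk (pullback.fst π m) = V := by
    by_contra hne
    exact hVmax _ (hT.iso_closed (Subobject.underlyingIso _).symm hP) (hle.lt_of_ne (Ne.symm hne))
  have hfst : pullback.fst π m ≫ π = 0 := by
    have hV : V.Factors (pullback.fst π m) :=
      Subobject.factors_of_le _ heq.le (Subobject.mk_factors_self _)
    rw [← Subobject.factorThru_arrow _ _ hV, Category.assoc, cokernel.condition, comp_zero]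
  refine IsZero.of_mono_eq_zero m ?_
  rw [← cancel_epi (pullback.snd π m), ← pullback.condition, hfst, comp_zero]

lemma CoversTC.eq_right_of_mem {T T' S : Set C} (h : CoversTC T T') (hS : IsTorsionClass S)
    (hTS : T ⊆ S) (hST' : S ⊆ T') {X : C} (hXS : X ∈ S) (hXT : X ∉ T) : S = T' :=
  (h.2.2 S hS hTS hST').resolve_left fun hST => hXT (hST ▸ hXS)

lemma CoversTC.eq_left_of_notMem {T T' S : Set C} (h : CoversTC T T') (hS : IsTorsionClass S)
    (hTS : T ⊆ S) (hST' : S ⊆ T') {X : C} (hXT' : X ∈ T') (hXS : X ∉ S) : S = T :=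
  (h.2.2 S hS hTS hST').resolve_right fun hST' => hXS (hST' ▸ hXT')

end TorsionClass

section Stability

variable {φ : C → P}

/-- `TgeSet φ p` is `Tge φ (Set.Ici p)`, and the paper's `T_{>a}` is `Tge φ (Set.Ioi a)`. -/
def Tge (φ : C → P) (Λ : Set P) : Set C :=
  {X : C | ExtClosure {Y : C | Semistable φ Y ∧ φ Y ∈ Λ} X}

lemma Tge_mono (φ : C → P) {Λ Λ' : Set P} (h : Λ ⊆ Λ') : Tge φ Λ ⊆ Tge φ Λ' :=
  fun _ hX =>
    ExtClosure.mono (S' := {Y | Semistable φ Y ∧ φ Y ∈ Λ'}) (fun _ hY => ⟨hY.1, h hY.2⟩) hX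

lemma Semistable.mem_Tge {X : C} (hX : Semistable φ X) {Λ : Set P} (h : φ X ∈ Λ) :
    X ∈ Tge φ Λ :=
  .of X ⟨hX, h⟩

lemma StableObj.semistable (hφ : IsStabilityFunction φ) {N : C} (hN : StableObj φ N) :
    Semistable φ N := by
  refine ⟨hN.1, fun L f hf hL => ?_⟩
  by_cases hi : IsIso f
  · exact (hφ.iso_invariant (asIso f)).le
  · exact (hN.2 f hf hL hi).le

namespace IsStabilityFunction

variable (hφ : IsStabilityFunction φ)
include hφ

lemma phase_le_of_epi {X Z : C} (hX : Semistable φ X) (e : X ⟶ Z) [Epi e] (hZ : ¬ IsZero Z) :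
    φ X ≤ φ Z := by
  by_cases hK : IsZero (kernel e)
  · have := (isSES_kernel e).isIso_g hK
    exact (hφ.iso_invariant (asIso e)).le
  · have := hX.2 (kernel.ι e) inferInstance hK
    obtain ⟨-, h⟩ | ⟨-, h⟩ | ⟨-, h⟩ := hφ.seesaw _ _ (isSES_kernel e) hK hX.1 hZ <;> order

lemma phase_lt_of_epi {X Z : C} (hX : StableObj φ X) (e : X ⟶ Z) [Epi e] (he : ¬ IsIso e)
    (hZ : ¬ IsZero Z) : φ X < φ Z := by
  have hK : ¬ IsZero (kernel e) := fun hK => he ((isSES_kernel e).isIso_g hK)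
  have hι : ¬ IsIso (kernel.ι e) := fun _ => hZ (IsZero.of_epi_eq_zero e
    (by rw [← IsIso.inv_hom_id_assoc (kernel.ι e) e, kernel.condition, comp_zero]))
  have := hX.2 (kernel.ι e) inferInstance hK hι
  obtain ⟨h, -⟩ | ⟨-, h⟩ | ⟨-, h⟩ := hφ.seesaw _ _ (isSES_kernel e) hK hX.1 hZ <;> order

lemma extClosedSet_setOf_phase_mem {Λ : Set P} (hΛ : IsUpperSet Λ) :
    ExtClosedSet {X : C | ¬ IsZero X → φ X ∈ Λ} := by
  intro X₁ X₂ X₃ f g hfg h₁ h₃ hX₂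
  by_cases hX₁ : IsZero X₁
  · have := hfg.isIso_g hX₁
    rw [hφ.iso_invariant (asIso g)]
    exact h₃ fun hX₃ => hX₂ (hX₃.of_iso (asIso g))
  by_cases hX₃ : IsZero X₃
  · have := hfg.isIso_f hX₃
    rw [← hφ.iso_invariant (asIso f)]
    exact h₁ hX₁
  obtain ⟨h, -⟩ | ⟨h, -⟩ | ⟨h, -⟩ := hφ.seesaw f g hfg hX₁ hX₂ hX₃
  · exact h ▸ h₁ hX₁
  · exact hΛ h.le (h₁ hX₁)
  · exact hΛ h.le (h₃ hX₃)

lemma phase_mem {Λ : Set P} (hΛ : IsUpperSet Λ) {X : C} (hX : X ∈ Tge φ Λ) (hX₀ : ¬ IsZero X) :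
    φ X ∈ Λ :=
  ExtClosure.mem_of_subset (T := {X : C | ¬ IsZero X → φ X ∈ Λ}) (fun _ h h' => (h' h).elim)
    (fun _ _ e h hY => hφ.iso_invariant e ▸ h fun hX => hY (hX.of_iso e.symm))
    (hφ.extClosedSet_setOf_phase_mem hΛ) (fun _ hY _ => hY.2) hX hX₀

lemma mem_Tge_iff {Λ : Set P} (hΛ : IsUpperSet Λ) {X : C} (hX : Semistable φ X) :
    X ∈ Tge φ Λ ↔ φ X ∈ Λ :=
  ⟨fun h => hφ.phase_mem hΛ h hX.1, hX.mem_Tge⟩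

/-- A minimal nonzero subobject among those of phase `≥ φ X` is stable. -/
lemma exists_stable_subobject [∀ X : C, IsArtinianObject X] {X : C} (hX : ¬ IsZero X) :
    ∃ (N : C) (n : N ⟶ X), Mono n ∧ StableObj φ N ∧ φ X ≤ φ N := by
  let S := {V : Subobject X | ¬ IsZero (V : C) ∧ φ X ≤ φ (V : C)}
  have htop : ⊤ ∈ S := by
    have e := asIso (⊤ : Subobject X).arrow
    exact ⟨fun h => hX (h.of_iso e.symm), (hφ.iso_invariant e).ge⟩
  obtain ⟨V, ⟨hV, hXV⟩, hVmin⟩ := (wellFounded_lt (α := Subobject X)).has_min S ⟨⊤, htop⟩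
  refine ⟨V, V.arrow, inferInstance, ⟨hV, fun L k _ hL hk => ?_⟩, hXV⟩
  have hlt : Subobject.mk (k ≫ V.arrow) < V := by
    simpa only [Subobject.mk_arrow] using Subobject.mk_lt_mk_of_comm (i₂ := V.arrow) k rfl hk
  have e := Subobject.underlyingIso (k ≫ V.arrow)
  have hLX : ¬ φ X ≤ φ L := fun h =>
    hVmin _ ⟨fun h0 => hL (h0.of_iso e.symm), by rwa [hφ.iso_invariant e]⟩ hlt
  exact (not_le.mp hLX).trans_le hXV

lemma phase_notMem_of_forall_hom_eq_zero [∀ X : C, IsArtinianObject X] {Λ : Set P}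
    (hΛ : IsUpperSet Λ) {F : C} (hF : ¬ IsZero F) (hTF : ∀ W ∈ Tge φ Λ, ∀ h : W ⟶ F, h = 0) :
    φ F ∉ Λ := fun hFΛ => by
  obtain ⟨U, m, _, hU, hFU⟩ := hφ.exists_stable_subobject hF
  exact hU.1 (IsZero.of_mono_eq_zero m (hTF U ((hU.semistable hφ).mem_Tge (hΛ hFU hFΛ)) m))

lemma phase_eq_of_TgeSet_eq {X Y : C} (hX : Semistable φ X) (hY : Semistable φ Y)
    (h : TgeSet φ (φ X) = TgeSet φ (φ Y)) : φ X = φ Y := by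
  have hXY : X ∈ TgeSet φ (φ Y) := h ▸ hX.mem_Tge le_rfl
  have hYX : Y ∈ TgeSet φ (φ X) := h.symm ▸ hY.mem_Tge le_rfl
  exact le_antisymm (hφ.phase_mem (isUpperSet_Ici _) hYX hY.1)
    (hφ.phase_mem (isUpperSet_Ici _) hXY hX.1)

end IsStabilityFunction

end Stability

section TorsionClassOfStability

variable [∀ X : C, IsNoetherianObject X] [∀ X : C, IsArtinianObject X]
variable {φ : C → P} (hφ : IsStabilityFunction φ)
include hφ

namespace IsStabilityFunction

/-- Noetherian induction on the kernel: split off a stable subobject of `Z` of phase `≥ φ Z`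
and recurse on the cokernel, a proper quotient of `X` with larger kernel. -/
lemma mem_Tge_of_epi_of_not_isIso {Λ : Set P} (hΛ : IsUpperSet Λ) {X : C}
    (hX : ∀ ⦃Z : C⦄ (e : X ⟶ Z), Epi e → ¬ IsIso e → ¬ IsZero Z → φ Z ∈ Λ)
    {Z : C} (e : X ⟶ Z) [Epi e] (he : ¬ IsIso e) : Z ∈ Tge φ Λ := by
  suffices ∀ K : Subobject X, ∀ ⦃Z : C⦄ (e : X ⟶ Z) [Epi e], ¬ IsIso e →
      kernelSubobject e = K → Z ∈ Tge φ Λ from this _ e he rfl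
  intro K
  induction K using (wellFounded_gt (α := Subobject X)).induction with | _ K ih => ?_
  rintro Z e _ he rfl
  by_cases hZ : IsZero Z
  · exact .zero Z hZ
  obtain ⟨U, m, _, hU, hZU⟩ := hφ.exists_stable_subobject hZ
  have he' : ¬ IsIso (e ≫ cokernel.π m) := fun _ =>
    he (have := mono_of_mono e (cokernel.π m); isIso_of_mono_of_epi e)
  exact .ext _ _ _ m (cokernel.π m) (isSES_cokernel m)
    ((hU.semistable hφ).mem_Tge (hΛ hZU (hX e ‹_› he hZ)))
    (ih _ (kernelSubobject_lt_kernelSubobject_comp_cokernel_π e m hU.1) _ he' rfl)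

lemma quotClosed_Tge {Λ : Set P} (hΛ : IsUpperSet Λ) : QuotClosed (Tge φ Λ) := by
  intro X Z e _ hX
  induction hX generalizing Z with
  | of Y hY =>
    by_cases he : IsIso e
    · exact .iso _ _ (asIso e) (hY.1.mem_Tge hY.2)
    · exact hφ.mem_Tge_of_epi_of_not_isIso hΛ
        (fun _ e' _ _ hZ' => hΛ (hφ.phase_le_of_epi hY.1 e' hZ') hY.2) e he
  | zero Y hY => exact .zero Z (IsZero.of_epi_eq_zero e (hY.eq_of_src _ _))
  | iso X Y e' _ ih => exact ih (e'.hom ≫ e) (epi_comp _ _)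
  | ext X₁ X₂ X₃ f g hfg _ _ ih₁ ih₃ =>
    -- `Z` is an extension of a quotient of `X₃` by the image of `X₁`
    let i := Abelian.image.ι (f ≫ e)
    obtain ⟨v, hv⟩ := hfg.exists_desc (e ≫ cokernel.π i) (by
      simpa only [i, Category.assoc, cokernel.condition, comp_zero, eq_comm] using
        congrArg (· ≫ cokernel.π i) (Abelian.image.fac (f ≫ e)))
    have := hfg.epi_g
    exact .ext _ _ _ i (cokernel.π i) (isSES_cokernel i)
      (ih₁ (Abelian.factorThruImage (f ≫ e)) inferInstance) (ih₃ v (epi_of_epi_fac hv))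

lemma isTorsionClass_Tge {Λ : Set P} (hΛ : IsUpperSet Λ) : IsTorsionClass (Tge φ Λ) :=
  ⟨.zero, fun X Y e h => .iso X Y e h, fun X₁ X₂ X₃ f g hfg h₁ h₃ => .ext X₁ X₂ X₃ f g hfg h₁ h₃,
    hφ.quotClosed_Tge hΛ⟩

lemma isTorsionClass_TgeSet (p : P) : IsTorsionClass (TgeSet φ p) :=
  hφ.isTorsionClass_Tge (isUpperSet_Ici p)

lemma hom_eq_zero_of_mem_Tge {Λ : Set P} (hΛ : IsUpperSet Λ) {N : C} (hN : Semistable φ N)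
    (hNΛ : φ N ∉ Λ) {W : C} (hW : W ∈ Tge φ Λ) (h : W ⟶ N) : h = 0 := by
  by_contra hh
  have hI := not_isZero_image_of_ne_zero hh
  have hIΛ := hφ.phase_mem hΛ (hφ.quotClosed_Tge hΛ (Abelian.factorThruImage h) inferInstance hW) hI
  exact hNΛ (hΛ (hN.2 (Abelian.image.ι h) inferInstance hI) hIΛ)

end IsStabilityFunction

end TorsionClassOfStability

namespace StableObj

variable {φ : C → P} (hφ : IsStabilityFunction φ) {N : C} (hN : StableObj φ N)
include hφ hN

lemma isIso_of_ne_zero {N' : C} (hN' : StableObj φ N') (hφN : φ N = φ N') {h : N ⟶ N'}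
    (hh : h ≠ 0) : IsIso h := by
  have hI := not_isZero_image_of_ne_zero hh
  have hIN' := (hN'.semistable hφ).2 (Abelian.image.ι h) inferInstance hI
  have : IsIso (Abelian.factorThruImage h) := by
    by_contra hiso
    have := hφ.phase_lt_of_epi hN _ hiso hI
    order
  have : Mono h := Abelian.image.fac h ▸ mono_comp _ _
  by_contra hiso
  exact (hN'.2 h this hN.1 hiso).ne hφN

variable [∀ X : C, IsNoetherianObject X] [∀ X : C, IsArtinianObject X]

lemma mem_Tge_Ioi_of_epi {Z : C} (e : N ⟶ Z) [Epi e] (he : ¬ IsIso e) :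
    Z ∈ Tge φ (Set.Ioi (φ N)) :=
  hφ.mem_Tge_of_epi_of_not_isIso (isUpperSet_Ioi _)
    (fun _ e' _ he' hZ' => hφ.phase_lt_of_epi hN e' he' hZ') e he

lemma mono_of_forall_hom_eq_zero {F : C}
    (hTF : ∀ W ∈ Tge φ (Set.Ioi (φ N)), ∀ h : W ⟶ F, h = 0) {c : N ⟶ F} (hc : c ≠ 0) : Mono c := by
  have : IsIso (Abelian.factorThruImage c) := by
    by_contra hiso
    refine hc ?_
    rw [← Abelian.image.fac c, hTF _ (hN.mem_Tge_Ioi_of_epi hφ _ hiso) (Abelian.image.ι c),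
      comp_zero]
  rw [← Abelian.image.fac c]
  exact mono_comp _ _

/-- The torsion-free quotient `F` of `X` with respect to `T_{>φ N}` vanishes: otherwise `N`
embeds in `F` with a cokernel in `T_{>φ N}`, and the seesaw property forces `φ F > φ N`. -/
lemma mem_Tge_Ioi_of_isSES {X Z : C} (f : N ⟶ X) (g : X ⟶ Z) (hfg : IsSES f g)
    (hZ : Z ∈ Tge φ (Set.Ioi (φ N))) (hns : ¬ ∃ r : X ⟶ N, f ≫ r = 𝟙 N) :
    X ∈ Tge φ (Set.Ioi (φ N)) := by
  have hT := hφ.isTorsionClass_Tge (isUpperSet_Ioi (φ N))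
  obtain ⟨V, hV, hTF⟩ := hT.exists_subobject_hom_cokernel_eq_zero X
  let π := cokernel.π V.arrow
  suffices hF : IsZero (cokernel V.arrow) by
    have := (isSES_cokernel V.arrow).isIso_f hF
    exact hT.iso_closed (asIso V.arrow) hV
  by_contra hF
  have := hfg.epi_g
  have hfπ : f ≫ π ≠ 0 := fun h0 => by
    obtain ⟨v, hv⟩ := hfg.exists_desc π h0
    have := epi_of_epi_fac hv
    exact hF (IsZero.of_epi_eq_zero v (hTF Z hZ v))
  have := hN.mono_of_forall_hom_eq_zero hφ hTF hfπ
  obtain ⟨w, hw⟩ := hfg.exists_desc (π ≫ cokernel.π (f ≫ π)) (by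
    rw [← Category.assoc, cokernel.condition])
  have hQ : cokernel (f ≫ π) ∈ Tge φ (Set.Ioi (φ N)) := hT.quot_closed w (epi_of_epi_fac hw) hZ
  have hQ₀ : ¬ IsZero (cokernel (f ≫ π)) := fun h0 => by
    have := (isSES_cokernel (f ≫ π)).isIso_f h0
    exact hns ⟨π ≫ inv (f ≫ π), by rw [← Category.assoc, IsIso.hom_inv_id]⟩
  have hNQ : φ N < φ (cokernel (f ≫ π)) := hφ.phase_mem (isUpperSet_Ioi _) hQ hQ₀
  have hNF : ¬ φ N < φ (cokernel V.arrow) :=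
    hφ.phase_notMem_of_forall_hom_eq_zero (isUpperSet_Ioi _) hF hTF
  obtain ⟨h, h'⟩ | ⟨h, h'⟩ | ⟨h, h'⟩ :=
    hφ.seesaw _ _ (isSES_cokernel (f ≫ π)) hN.1 hF hQ₀ <;> order

lemma isMinimalExtending_Tge_Ioi : IsMinimalExtending (Tge φ (Set.Ioi (φ N))) N where
  proper_quot_mem _ p _ hp := hN.mem_Tge_Ioi_of_epi hφ p hp
  ext_mem _ _ f g hfg hZ hns := hN.mem_Tge_Ioi_of_isSES hφ f g hfg hZ hns
  hom_zero _ hW f :=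
    hφ.hom_eq_zero_of_mem_Tge (isUpperSet_Ioi _) (hN.semistable hφ) (lt_irrefl _) hW f

end StableObj

section Cover

variable {φ : C → P} (hφ : IsStabilityFunction φ) {p q : P}
include hφ

lemma IsStabilityFunction.exists_stable_of_not_subset [∀ X : C, IsArtinianObject X]
    (h : ¬ TgeSet φ q ⊆ TgeSet φ p) : ∃ N : C, StableObj φ N ∧ q ≤ φ N ∧ φ N < p := by
  obtain ⟨Y, ⟨hY, hqY⟩, hYp⟩ : ∃ Y : C, (Semistable φ Y ∧ q ≤ φ Y) ∧ Y ∉ TgeSet φ p := by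
    by_contra! hsub
    exact h fun X hX => ExtClosure.of_forall_extClosure hsub hX
  obtain ⟨N, n, _, hN, hYN⟩ := hφ.exists_stable_subobject hY.1
  have hNY : φ N = φ Y := le_antisymm (hY.2 n ‹_› hN.1) hYN
  exact ⟨N, hN, hNY ▸ hqY, hNY ▸ not_le.mp fun hpY => hYp (hY.mem_Tge hpY)⟩

variable [∀ X : C, IsNoetherianObject X] [∀ X : C, IsArtinianObject X]

lemma CoversTC.nonempty_iso_of_stable (hcov : CoversTC (TgeSet φ p) (TgeSet φ q)) {N N' : C}
    (hN : StableObj φ N) (hN' : StableObj φ N') (hNp : φ N < p)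
    (hTN : TgeSet φ (φ N) = TgeSet φ q) (hTN' : TgeSet φ (φ N') = TgeSet φ q) :
    Nonempty (N ≅ N') := by
  by_contra hiso
  have hφN := hφ.phase_eq_of_TgeSet_eq (hN.semistable hφ) (hN'.semistable hφ) (hTN.trans hTN'.symm)
  have hNN' : ∀ h : N ⟶ N', h = 0 := fun h => by_contra fun hh =>
    hiso ⟨have := hN.isIso_of_ne_zero hφ hN' hφN hh; asIso h⟩
  have hS := hcov.eq_right_of_mem
    ((hφ.isTorsionClass_TgeSet q).inter (isTorsionClass_setOf_hom_eq_zero N'))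
    (fun W hW => ⟨hcov.1 hW, hφ.hom_eq_zero_of_mem_Tge (isUpperSet_Ici p) (hN'.semistable hφ)
      (hφN ▸ hNp).not_ge hW⟩)
    Set.inter_subset_left ⟨hTN ▸ (hN.semistable hφ).mem_Tge le_rfl, hNN'⟩
    ((hφ.mem_Tge_iff (isUpperSet_Ici p) (hN.semistable hφ)).not.mpr hNp.not_ge)
  have hN'q : N' ∈ TgeSet φ q := hTN' ▸ (hN'.semistable hφ).mem_Tge le_rfl
  rw [← hS] at hN'q
  exact hN'.1 ((IsZero.iff_id_eq_zero N').mpr (hN'q.2 _))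

end Cover

/-- if the torsion classes `T_{≥p} ⋖ T_{≥q}` of a stability
function form a cover, then there is a unique (up to isomorphism) stable object
`N` with `T_{≥φ(N)} = T_{≥q}`; it is a minimal extending object for `T_{≥p}` and
satisfies `q ≤ φ(N) < p`. -/
theorem stable_object_of_cover
    {C : Type u} [Category.{v} C] [Abelian C]
    [∀ X : C, IsNoetherianObject X] [∀ X : C, IsArtinianObject X]
    {P : Type*} [LinearOrder P]
    (φ : C → P) (hφ : IsStabilityFunction φ) (p q : P)
    (hcov : CoversTC (TgeSet φ p) (TgeSet φ q)) :
    ∃ N : C, StableObj φ N ∧ TgeSet φ (φ N) = TgeSet φ q ∧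
      (∀ N' : C, StableObj φ N' → TgeSet φ (φ N') = TgeSet φ q → Nonempty (N ≅ N')) ∧
      IsMinimalExtending (TgeSet φ p) N ∧ q ≤ φ N ∧ φ N < p := by
  obtain ⟨N, hN, hqN, hNp⟩ :=
    hφ.exists_stable_of_not_subset fun h => hcov.2.1 (hcov.1.antisymm h)
  have hNN : N ∈ TgeSet φ (φ N) := (hN.semistable hφ).mem_Tge le_rfl
  have hTN : TgeSet φ (φ N) = TgeSet φ q :=
    hcov.eq_right_of_mem (hφ.isTorsionClass_TgeSet _)
      (Tge_mono φ (Set.Ici_subset_Ici.mpr hNp.le)) (Tge_mono φ (Set.Ici_subset_Ici.mpr hqN)) hNN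
      ((hφ.mem_Tge_iff (isUpperSet_Ici p) (hN.semistable hφ)).not.mpr hNp.not_ge)
  have hTgt : Tge φ (Set.Ioi (φ N)) = TgeSet φ p :=
    hcov.eq_left_of_notMem (hφ.isTorsionClass_Tge (isUpperSet_Ioi _))
      (Tge_mono φ (Set.Ici_subset_Ioi.mpr hNp)) (hTN ▸ Tge_mono φ Set.Ioi_subset_Ici_self)
      (hTN ▸ hNN) ((hφ.mem_Tge_iff (isUpperSet_Ioi _) (hN.semistable hφ)).not.mpr (lt_irrefl _))
  exact ⟨N, hN, hTN, fun N' hN' hTN' => hcov.nonempty_iso_of_stable hφ hN hN' hNp hTN hTN',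
    hTgt ▸ hN.isMinimalExtending_Tge_Ioi hφ, hqN, hNp⟩
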